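/- In the three-spin model, the non-overlap distribution for the all-zero overlap configuration σ̃ (σ̃_i = 0 for all i) satisfies μ^{σ̃}(ω) = Z_{σ̃}⁻¹ exp(J₁₂𝟙[ω₁=ω₂] + J₂₃𝟙[ω₂=ω₃]), where Z_{σ̃} = 2(e^{J₁₂+J₂₃} + e^{J₁₂} + e^{J₂₃} + 1). -/

import Mathlib

/-!
For `ω ∈ {±1}³` the Gibbs weights of `ω` and `-ω` together pick up `J₁₂` exactly when
`ω₁ = ω₂` (both `-1` in `ω`, or both `-1` in `-ω`) and `J₂₃` exactly when `ω₂ = ω₃`, so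
`μ(ω) μ(-ω) = Z⁻² exp(J₁₂𝟙[ω₁=ω₂] + J₂₃𝟙[ω₂=ω₃])`. Normalizing, the `Z⁻²` cancels, and the
sum of these weights factorizes over the middle spin as `2 (e^{J₁₂} + 1)(e^{J₂₃} + 1) = Z_{σ̃}`.
-/

open Finset Real

lemma Finset.sum_piFinset_const_succ {β M : Type*} [AddCommMonoid M] (s : Finset β) (n : ℕ)
    (f : (Fin (n + 1) → β) → M) :
    ∑ ω ∈ Fintype.piFinset (fun _ => s), f ω =
      ∑ a ∈ s, ∑ ω ∈ Fintype.piFinset (fun _ : Fin n => s), f (Fin.cons a ω) := by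
  have h := filter_piFinset_eq_map_consEquiv (fun _ : Fin (n + 1) => s) (fun _ => True)
  rw [filter_true_of_mem fun _ _ => trivial, filter_true_of_mem fun _ _ => trivial] at h
  rw [h, sum_map, sum_product]
  rfl

lemma Finset.sum_piFinset_fin_three {β M : Type*} [AddCommMonoid M] (s : Finset β)
    (f : (Fin 3 → β) → M) :
    ∑ ω ∈ Fintype.piFinset (fun _ => s), f ω = ∑ a ∈ s, ∑ b ∈ s, ∑ c ∈ s, f ![a, b, c] := by
  simp only [sum_piFinset_const_succ, Fintype.piFinset_of_isEmpty, univ_unique, sum_singleton,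
    Subsingleton.elim (default : Fin 0 → β) ![]]
  rfl

lemma ite_and_add_ite_neg_and {R : Type*} [AddMonoidWithOne R] {a b s : ℤ}
    (ha : a ∈ ({-1, 1} : Finset ℤ)) (hb : b ∈ ({-1, 1} : Finset ℤ))
    (hs : s ∈ ({-1, 1} : Finset ℤ)) :
    ((if a = s ∧ b = s then 1 else 0) + (if -a = s ∧ -b = s then 1 else 0) : R) =
      if a = b then 1 else 0 := by
  simp only [mem_insert, mem_singleton] at ha hb hs
  rcases ha with rfl | rfl <;> rcases hb with rfl | rfl <;> rcases hs with rfl | rfl <;> simp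

lemma sum_pm_one_exp_mul_ite_eq {b : ℤ} (hb : b ∈ ({-1, 1} : Finset ℤ)) (J : ℝ) :
    ∑ c ∈ ({-1, 1} : Finset ℤ), exp (J * if b = c then 1 else 0) = exp J + 1 := by
  simp only [mem_insert, mem_singleton] at hb
  rcases hb with rfl | rfl <;> norm_num [add_comm]

noncomputable def threeSpinWeight (J12 J23 : ℝ) (ω : Fin 3 → ℤ) : ℝ :=
  exp (J12 * (if ω 0 = -1 ∧ ω 1 = -1 then 1 else 0) + J23 * (if ω 1 = 1 ∧ ω 2 = 1 then 1 else 0))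

noncomputable def nonOverlapWeight (J12 J23 : ℝ) (ω : Fin 3 → ℤ) : ℝ :=
  exp (J12 * (if ω 0 = ω 1 then 1 else 0) + J23 * (if ω 1 = ω 2 then 1 else 0))

lemma threeSpinWeight_mul_neg (J12 J23 : ℝ) {ω : Fin 3 → ℤ}
    (hω : ω ∈ Fintype.piFinset fun _ => ({-1, 1} : Finset ℤ)) :
    threeSpinWeight J12 J23 ω * threeSpinWeight J12 J23 (fun i => -ω i) =
      nonOverlapWeight J12 J23 ω := by
  rw [Fintype.mem_piFinset] at hω
  rw [threeSpinWeight, threeSpinWeight, nonOverlapWeight, ← exp_add,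
    ← ite_and_add_ite_neg_and (hω 0) (hω 1) (s := -1) (by simp),
    ← ite_and_add_ite_neg_and (hω 1) (hω 2) (s := 1) (by simp)]
  ring_nf

lemma sum_nonOverlapWeight (J12 J23 : ℝ) :
    ∑ ω ∈ Fintype.piFinset (fun _ => ({-1, 1} : Finset ℤ)), nonOverlapWeight J12 J23 ω =
      2 * (exp (J12 + J23) + exp J12 + exp J23 + 1) := by
  set S : Finset ℤ := {-1, 1}
  calc ∑ ω ∈ Fintype.piFinset (fun _ => S), nonOverlapWeight J12 J23 ω
      = ∑ b ∈ S, (∑ a ∈ S, exp (J12 * if a = b then 1 else 0)) *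
          ∑ c ∈ S, exp (J23 * if b = c then 1 else 0) := by
        rw [sum_piFinset_fin_three, sum_comm]
        simp only [sum_mul_sum, nonOverlapWeight, exp_add, Matrix.cons_val_zero,
          Matrix.cons_val_one, Matrix.cons_val_two, Matrix.head_cons, Matrix.tail_cons]
        rfl
    _ = ∑ b ∈ S, (exp J12 + 1) * (exp J23 + 1) :=
        sum_congr rfl fun b hb => by
          simp_rw [@eq_comm ℤ _ b]
          rw [sum_pm_one_exp_mul_ite_eq hb, sum_pm_one_exp_mul_ite_eq hb]
    _ = 2 * (exp (J12 + J23) + exp J12 + exp J23 + 1) := by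
        rw [sum_const, card_pair (by norm_num), nsmul_eq_mul, exp_add]
        ring

/-- The non-overlap distribution of the three-spin model for the all-zero overlap
configuration `σ̃` is the symmetrized Gibbs measure
`μ^{σ̃}(ω) = Z_{σ̃}⁻¹ exp(J₁₂𝟙[ω₁=ω₂] + J₂₃𝟙[ω₂=ω₃])`. -/
theorem stmt_9 (J12 J23 : ℝ) :
    let S : Finset ℤ := {-1, 1}
    let Ωc := Fintype.piFinset fun _ : Fin 3 => S
    let Z : ℝ := 2 * (2 + Real.exp J12 + Real.exp J23)
    let μ : (Fin 3 → ℤ) → ℝ := fun ω =>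
      Real.exp (J12 * (if ω 0 = -1 ∧ ω 1 = -1 then 1 else 0)
        + J23 * (if ω 1 = 1 ∧ ω 2 = 1 then 1 else 0)) / Z
    let ρ : ℝ := ∑ ω ∈ Ωc, μ ω * μ fun i => -ω i
    let Zσ : ℝ := 2 * (Real.exp (J12 + J23) + Real.exp J12 + Real.exp J23 + 1)
    ∀ ω ∈ Ωc,
      μ ω * (μ fun i => -ω i) / ρ =
        Real.exp (J12 * (if ω 0 = ω 1 then 1 else 0)
          + J23 * (if ω 1 = ω 2 then 1 else 0)) / Zσ := by
  intro S Ωc Z μ ρ Zσ ω hω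
  have hμμ : ∀ τ ∈ Ωc, μ τ * μ (fun i => -τ i) = nonOverlapWeight J12 J23 τ / (Z * Z) :=
    fun τ hτ => by rw [div_mul_div_comm]; exact congrArg (· / _) (threeSpinWeight_mul_neg J12 J23 hτ)
  have hρ : ρ = Zσ / (Z * Z) := by
    rw [show Zσ = _ from (sum_nonOverlapWeight J12 J23).symm, sum_div]
    exact sum_congr rfl hμμ
  rw [hρ, hμμ ω hω, div_div_div_cancel_right₀ (by positivity)]
  rfl
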